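/- Let f_1, …, f_l : ℝ^N → ℝ, let μ ∈ ℝ^N have μ_j > 0 for every j, let g_i denote the central-difference gradient estimator of f_i, let ḡ = (1/l) ∑_{i=1}^l g_i, and let f = (1/l) ∑_{i=1}^l f_i be differentiable. Assume: (i) each g_i is L̃-Lipschitz, i.e. ‖g_i(x) − g_i(y)‖ ≤ L̃‖x − y‖ for all x, y and all i; and (ii) ‖ḡ(x)‖ ≤ L̂‖∇f(x)‖ for all x. Fix x, x̃ ∈ ℝ^N and b ≥ 1, let i_1, …, i_b be independent random indices uniformly distributed on {1, …, l}, and set v = (1/b) ∑_{k=1}^b (g_{i_k}(x) − g_{i_k}(x̃)) + ḡ(x̃). Then 𝔼‖v‖² ≤ (2L̃²/b)‖x − x̃‖² + 2L̂²‖∇f(x)‖². -/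

import Mathlib

/-- The central-difference gradient estimator
`g_f(x) = ∑_j ((f(x + μ_j e_j) - f(x - μ_j e_j))/(2 μ_j)) e_j`. -/
noncomputable def cdGrad (N : ℕ) (f : EuclideanSpace ℝ (Fin N) → ℝ) (μ : Fin N → ℝ)
    (x : EuclideanSpace ℝ (Fin N)) : EuclideanSpace ℝ (Fin N) :=
  ∑ j : Fin N,
    ((f (x + μ j • EuclideanSpace.single j (1 : ℝ)) -
        f (x - μ j • EuclideanSpace.single j (1 : ℝ))) / (2 * μ j)) •
      EuclideanSpace.single j (1 : ℝ)

open Finset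

lemma aux_sum_sq (l b : ℕ) {E : Type*} [NormedAddCommGroup E] [InnerProductSpace ℝ E]
    (Y : Fin l → E) (hY : ∑ i, Y i = 0) :
    ∑ ω : Fin b → Fin l, ‖∑ k, Y (ω k)‖ ^ 2
      = (b : ℝ) * (l : ℝ) ^ (b - 1) * ∑ i, ‖Y i‖ ^ 2 := by
  induction b with
  | zero => simp
  | succ b ih =>
    have e : ∀ (p : Fin l × (Fin b → Fin l)),
        ∑ k : Fin (b+1), Y ((Fin.consEquiv (fun _ => Fin l)) p k)
          = Y p.1 + ∑ k : Fin b, Y (p.2 k) := by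
      intro p
      rw [Fin.sum_univ_succ]
      simp [Fin.consEquiv]
    rw [← (Fin.consEquiv (fun _ => Fin l)).sum_comp]
    simp only [e]
    rw [Fintype.sum_prod_type]
    have expand : ∀ (a s : E), ‖a + s‖ ^ 2 = ‖a‖^2 + 2 * inner ℝ a s + ‖s‖^2 := by
      intro a s
      rw [@norm_add_sq_real]
    simp only [expand]
    rw [Finset.sum_comm]
    have inner_zero : ∀ s : E, ∑ i : Fin l, (2 * (inner ℝ (Y i) s : ℝ)) = 0 := by
      intro s
      rw [← Finset.mul_sum, ← sum_inner, hY, inner_zero_left, mul_zero]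
    simp only [Finset.sum_add_distrib, inner_zero]
    simp only [Finset.sum_const, card_univ, Fintype.card_fun, Fintype.card_fin, nsmul_eq_mul]
    rw [← Finset.mul_sum, ih]
    push_cast
    rcases Nat.eq_zero_or_pos b with hb | hb
    · subst hb; simp
    · have hpow : (l:ℝ) * (l:ℝ) ^ (b-1) = (l:ℝ) ^ b := by
        conv_rhs => rw [← Nat.succ_pred_eq_of_pos hb]
        rw [pow_succ']
        rfl
      rw [← hpow]; ring

set_option maxHeartbeats 1000000 in
lemma main_aux {E : Type*} [NormedAddCommGroup E] [InnerProductSpace ℝ E]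
    (l b : ℕ) (hl : 0 < l) (hb : 1 ≤ b) (g : Fin l → E → E) (x xt : E) (A B : ℝ)
    (hgA : ∀ i, ‖g i x - g i xt‖ ≤ A)
    (hgB : ‖(1/(l:ℝ)) • ∑ i, g i x‖ ≤ B) :
    ((l:ℝ)^b)⁻¹ * ∑ ω : Fin b → Fin l,
      ‖(1/(b:ℝ)) • ∑ k, (g (ω k) x - g (ω k) xt) + (1/(l:ℝ)) • ∑ i, g i xt‖^2
      ≤ 2 * A^2 / b + 2 * B^2 := by
  have hl0 : (l:ℝ) ≠ 0 := Nat.cast_ne_zero.mpr hl.ne'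
  have hb0 : (b:ℝ) ≠ 0 := Nat.cast_ne_zero.mpr (by omega)
  have hbpos : (0:ℝ) < b := by positivity
  have hlpos : (0:ℝ) < l := by positivity
  set Δ : Fin l → E := fun i => g i x - g i xt with hΔdef
  set Δb : E := (1/(l:ℝ)) • ∑ i, Δ i with hΔbdef
  set Y : Fin l → E := fun i => Δ i - Δb with hYdef
  set c : E := (1/(l:ℝ)) • ∑ i, g i x with hcdef
  have hA0 : 0 ≤ A := le_trans (norm_nonneg _) (hgA ⟨0, hl⟩)
  have hB0 : 0 ≤ B := le_trans (norm_nonneg _) hgB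
  have hsumΔ : ∑ i, Δ i = (l:ℝ) • Δb := by
    rw [hΔbdef, smul_smul, mul_one_div, div_self hl0, one_smul]
  have hY : ∑ i, Y i = 0 := by
    have h1 : ∑ i, Y i = ∑ i, Δ i - (l:ℕ) • Δb := by
      simp [hYdef, Finset.sum_sub_distrib]
    rw [h1, hsumΔ, ← Nat.cast_smul_eq_nsmul ℝ, sub_self]
  have hveq : ∀ ω : Fin b → Fin l,
      (1/(b:ℝ)) • ∑ k, (g (ω k) x - g (ω k) xt) + (1/(l:ℝ)) • ∑ i, g i xt
        = (1/(b:ℝ)) • ∑ k, Y (ω k) + c := by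
    intro ω
    have h1 : ∀ k : Fin b, g (ω k) x - g (ω k) xt = Y (ω k) + Δb := by
      intro k; simp [hYdef, hΔdef]
    rw [Finset.sum_congr rfl (fun k _ => h1 k), Finset.sum_add_distrib, smul_add,
      Finset.sum_const, card_univ, Fintype.card_fin, ← Nat.cast_smul_eq_nsmul ℝ, smul_smul]
    have h2 : (1/(b:ℝ)) * (b:ℝ) = 1 := by field_simp
    rw [h2, one_smul, add_assoc]
    congr 1
    rw [hΔbdef, hcdef]
    have h3 : ∑ i, Δ i = ∑ i, g i x - ∑ i, g i xt := by
      simp [hΔdef, Finset.sum_sub_distrib]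
    rw [h3, smul_sub, sub_add_cancel]
  have key := aux_sum_sq l b Y hY
  have hw2 : ∀ ω : Fin b → Fin l,
      ‖(1/(b:ℝ)) • ∑ k, Y (ω k)‖^2 = (1/(b:ℝ))^2 * ‖∑ k, Y (ω k)‖^2 := by
    intro ω
    rw [norm_smul, mul_pow, Real.norm_eq_abs, abs_of_pos (by positivity)]
  have hinner : ∑ i, (inner ℝ (Δ i) Δb : ℝ) = (l:ℝ) * ‖Δb‖^2 := by
    rw [← sum_inner, hsumΔ, real_inner_smul_left, real_inner_self_eq_norm_sq]
  have hvar : ∑ i, ‖Y i‖^2 = ∑ i, ‖Δ i‖^2 - (l:ℝ) * ‖Δb‖^2 := by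
    have h1 : ∀ i, ‖Y i‖^2 = ‖Δ i‖^2 - 2 * inner ℝ (Δ i) Δb + ‖Δb‖^2 := by
      intro i
      rw [hYdef]
      exact norm_sub_sq_real _ _
    rw [Finset.sum_congr rfl (fun i _ => h1 i), Finset.sum_add_distrib,
      Finset.sum_sub_distrib, ← Finset.mul_sum, hinner, Finset.sum_const, card_univ,
      Fintype.card_fin, nsmul_eq_mul]
    ring
  have hΔsum : ∑ i, ‖Δ i‖^2 ≤ (l:ℝ) * A^2 := by
    calc ∑ i, ‖Δ i‖^2 ≤ ∑ _i : Fin l, A^2 :=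
          Finset.sum_le_sum (fun i _ => pow_le_pow_left₀ (norm_nonneg _) (hgA i) 2)
      _ = (l:ℝ) * A^2 := by simp [mul_comm]
  have hT : ∑ i, ‖Y i‖^2 ≤ (l:ℝ) * A^2 := by
    rw [hvar]
    nlinarith [hΔsum, norm_nonneg Δb, sq_nonneg ‖Δb‖, hlpos]
  have hC : ‖c‖^2 ≤ B^2 := pow_le_pow_left₀ (norm_nonneg _) hgB 2
  have hquad : ∀ ω : Fin b → Fin l,
      ‖(1/(b:ℝ)) • ∑ k, Y (ω k) + c‖^2
        ≤ 2 * ‖(1/(b:ℝ)) • ∑ k, Y (ω k)‖^2 + 2 * ‖c‖^2 := by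
    intro ω
    have h1 := norm_add_le ((1/(b:ℝ)) • ∑ k, Y (ω k)) c
    nlinarith [norm_nonneg ((1/(b:ℝ)) • ∑ k, Y (ω k)), norm_nonneg c,
      norm_nonneg ((1/(b:ℝ)) • ∑ k, Y (ω k) + c),
      sq_nonneg (‖(1/(b:ℝ)) • ∑ k, Y (ω k)‖ - ‖c‖),
      mul_self_le_mul_self (norm_nonneg ((1/(b:ℝ)) • ∑ k, Y (ω k) + c)) h1]
  have hpow : (l:ℝ)^(b-1) * (l:ℝ) = (l:ℝ)^b := by
    conv_rhs => rw [← Nat.succ_pred_eq_of_pos hb]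
    rw [pow_succ]
    rfl
  have hP0 : (0:ℝ) < (l:ℝ)^(b-1) := by positivity
  have hsum_le : ∑ ω : Fin b → Fin l,
      ‖(1/(b:ℝ)) • ∑ k, (g (ω k) x - g (ω k) xt) + (1/(l:ℝ)) • ∑ i, g i xt‖^2
      ≤ 2 * (1/(b:ℝ))^2 * ((b:ℝ) * (l:ℝ)^(b-1) * ∑ i, ‖Y i‖^2) + (l:ℝ)^b * (2 * ‖c‖^2) := by
    calc ∑ ω : Fin b → Fin l,
        ‖(1/(b:ℝ)) • ∑ k, (g (ω k) x - g (ω k) xt) + (1/(l:ℝ)) • ∑ i, g i xt‖^2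
        = ∑ ω : Fin b → Fin l, ‖(1/(b:ℝ)) • ∑ k, Y (ω k) + c‖^2 := by
          exact Finset.sum_congr rfl (fun ω _ => by rw [hveq ω])
      _ ≤ ∑ ω : Fin b → Fin l, (2 * ‖(1/(b:ℝ)) • ∑ k, Y (ω k)‖^2 + 2 * ‖c‖^2) :=
          Finset.sum_le_sum (fun ω _ => hquad ω)
      _ = 2 * (1/(b:ℝ))^2 * ((b:ℝ) * (l:ℝ)^(b-1) * ∑ i, ‖Y i‖^2) + (l:ℝ)^b * (2 * ‖c‖^2) := by
          rw [Finset.sum_add_distrib, Finset.sum_const, card_univ, Fintype.card_fun,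
            Fintype.card_fin, Fintype.card_fin, nsmul_eq_mul]
          simp only [hw2]
          have h4 : ∑ ω : Fin b → Fin l, 2 * ((1/(b:ℝ))^2 * ‖∑ k, Y (ω k)‖^2)
              = 2 * (1/(b:ℝ))^2 * ∑ ω : Fin b → Fin l, ‖∑ k, Y (ω k)‖^2 := by
            rw [Finset.mul_sum]
            exact Finset.sum_congr rfl (fun _ _ => by ring)
          rw [h4, key]
          push_cast
          ring
  have hfinal : 2 * (1/(b:ℝ))^2 * ((b:ℝ) * (l:ℝ)^(b-1) * ∑ i, ‖Y i‖^2) + (l:ℝ)^b * (2 * ‖c‖^2)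
      ≤ (l:ℝ)^b * (2 * A^2 / b + 2 * B^2) := by
    rw [← hpow]
    have e1 : 2 * (1/(b:ℝ))^2 * ((b:ℝ) * (l:ℝ)^(b-1) * ((l:ℝ) * A^2))
        = (l:ℝ)^(b-1) * (l:ℝ) * (2 * A^2 / b) := by
      field_simp
    have h1 : 2 * (1/(b:ℝ))^2 * ((b:ℝ) * (l:ℝ)^(b-1) * ∑ i, ‖Y i‖^2)
        ≤ (l:ℝ)^(b-1) * (l:ℝ) * (2 * A^2 / b) := by
      rw [← e1]
      have : (0:ℝ) ≤ 2 * (1/(b:ℝ))^2 * ((b:ℝ) * (l:ℝ)^(b-1)) := by positivity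
      nlinarith [mul_le_mul_of_nonneg_left hT this]
    have h2 : (l:ℝ)^(b-1) * (l:ℝ) * (2 * ‖c‖^2) ≤ (l:ℝ)^(b-1) * (l:ℝ) * (2 * B^2) := by
      exact mul_le_mul_of_nonneg_left (by linarith [hC]) (by positivity)
    nlinarith [h1, h2]
  calc ((l:ℝ)^b)⁻¹ * ∑ ω : Fin b → Fin l,
      ‖(1/(b:ℝ)) • ∑ k, (g (ω k) x - g (ω k) xt) + (1/(l:ℝ)) • ∑ i, g i xt‖^2
      ≤ ((l:ℝ)^b)⁻¹ * ((l:ℝ)^b * (2 * A^2 / b + 2 * B^2)) := by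
        apply mul_le_mul_of_nonneg_left _ (by positivity)
        exact le_trans hsum_le hfinal
    _ = 2 * A^2 / b + 2 * B^2 := by
        rw [← mul_assoc, inv_mul_cancel₀ (by positivity), one_mul]


/-- With `g i` the central-difference estimator of `f i`, `ḡ = (1/l) ∑ i, g i`,
`f = (1/l) ∑_i f_i` differentiable, each `g i` being `L̃`-Lipschitz and
`‖ḡ(x)‖ ≤ L̂ ‖∇f(x)‖` for all `x`, the variance-reduced estimator
`v = (1/b) ∑_k (g_{i_k}(x) - g_{i_k}(x̃)) + ḡ(x̃)` over `b` i.i.d. uniform indices satisfies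
`𝔼‖v‖² ≤ (2 L̃²/b) ‖x - x̃‖² + 2 L̂² ‖∇f(x)‖²`. The expectation is the average over the
`l^b` equally likely index tuples. -/
theorem stmt_6 (N l b : ℕ) (hl : 0 < l) (hb : 1 ≤ b) (Lt Lh : ℝ)
    (f : Fin l → EuclideanSpace ℝ (Fin N) → ℝ) (μ : Fin N → ℝ) (hμ : ∀ j, 0 < μ j)
    (hF : Differentiable ℝ (fun y : EuclideanSpace ℝ (Fin N) => (1 / (l : ℝ)) * ∑ i : Fin l, f i y))
    (hg : ∀ (i : Fin l) (x y : EuclideanSpace ℝ (Fin N)),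
      ‖cdGrad N (f i) μ x - cdGrad N (f i) μ y‖ ≤ Lt * ‖x - y‖)
    (hgbar : ∀ x : EuclideanSpace ℝ (Fin N),
      ‖(1 / (l : ℝ)) • ∑ i : Fin l, cdGrad N (f i) μ x‖
        ≤ Lh * ‖gradient (fun y => (1 / (l : ℝ)) * ∑ i : Fin l, f i y) x‖)
    (x xt : EuclideanSpace ℝ (Fin N)) :
    ((l : ℝ) ^ b)⁻¹ *
        ∑ ω : Fin b → Fin l,
          ‖(1 / (b : ℝ)) • ∑ k : Fin b, (cdGrad N (f (ω k)) μ x - cdGrad N (f (ω k)) μ xt)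
            + (1 / (l : ℝ)) • ∑ i : Fin l, cdGrad N (f i) μ xt‖ ^ 2
      ≤ (2 * Lt ^ 2 / b) * ‖x - xt‖ ^ 2
        + 2 * Lh ^ 2 * ‖gradient (fun y => (1 / (l : ℝ)) * ∑ i : Fin l, f i y) x‖ ^ 2 := by
  have h := main_aux l b hl hb (fun i => cdGrad N (f i) μ) x xt
    (Lt * ‖x - xt‖) (Lh * ‖gradient (fun y => (1 / (l : ℝ)) * ∑ i : Fin l, f i y) x‖)
    (fun i => hg i x xt) (hgbar x)
  calc ((l : ℝ) ^ b)⁻¹ *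
        ∑ ω : Fin b → Fin l,
          ‖(1 / (b : ℝ)) • ∑ k : Fin b, (cdGrad N (f (ω k)) μ x - cdGrad N (f (ω k)) μ xt)
            + (1 / (l : ℝ)) • ∑ i : Fin l, cdGrad N (f i) μ xt‖ ^ 2
      ≤ 2 * (Lt * ‖x - xt‖)^2 / b
          + 2 * (Lh * ‖gradient (fun y => (1 / (l : ℝ)) * ∑ i : Fin l, f i y) x‖)^2 := h
    _ = (2 * Lt ^ 2 / b) * ‖x - xt‖ ^ 2
        + 2 * Lh ^ 2 * ‖gradient (fun y => (1 / (l : ℝ)) * ∑ i : Fin l, f i y) x‖ ^ 2 := by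
        ring
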